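/- arXiv:1105.1829 — 3 statements merged into one kernel-verified Lean document; each statement's English description precedes it below -/
import Mathlib

section
/- Conservation of the Laplace–Runge–Lenz vector: along any solution of the Kepler dynamics, the function t ↦ v(t) × (r(t) × v(t)) − μ r(t)/|r(t)| is constant on ℝ. (This constant vector points along the apsidal line of the conic orbit, the direction computed by the paper's linear system (12).) -/
/-!
A central force conserves the angular momentum `L = r × v`, so the derivative of `v × L` is
`v' × L = -(μ / |r|³) r × (r × v) = (μ / |r|³) (|r|² v - ⟪r, v⟫ r)`, which is exactly the
derivative of `μ r / |r|`.
-/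

/-- Cross product on ℝ³ (Euclidean space). -/
noncomputable def cross (a b : EuclideanSpace ℝ (Fin 3)) : EuclideanSpace ℝ (Fin 3) :=
  WithLp.toLp 2 ![a 1 * b 2 - a 2 * b 1, a 2 * b 0 - a 0 * b 2, a 0 * b 1 - a 1 * b 0]

open scoped RealInnerProductSpace

local notation "E³" => EuclideanSpace ℝ (Fin 3)

theorem isBilinearMap_cross : IsBilinearMap ℝ cross := by
  constructor <;> intros <;> ext i <;> fin_cases i <;> simp [cross] <;> ring

namespace EuclideanSpace

theorem cross_self (a : E³) : cross a a = 0 := by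
  ext i; fin_cases i <;> simp [cross] <;> ring

theorem cross_zero_right (a : E³) : cross a 0 = 0 := by
  ext i; fin_cases i <;> simp [cross]

theorem cross_cross_eq_inner_smul_sub_inner_smul (a b c : E³) :
    cross a (cross b c) = ⟪a, c⟫ • b - ⟪a, b⟫ • c := by
  ext i; fin_cases i <;> simp [cross, PiLp.inner_apply, Fin.sum_univ_three] <;> ring

end EuclideanSpace

theorem HasDerivAt.cross {f g : ℝ → E³} {f' g' : E³} {t : ℝ} (hf : HasDerivAt f f' t)
    (hg : HasDerivAt g g' t) :
    HasDerivAt (fun s => cross (f s) (g s)) (cross (f t) g' + cross f' (g t)) t :=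
  isBilinearMap_cross.toContinuousBilinearMap.hasDerivAt_of_bilinear (fun _ => hf) (fun _ => hg)

theorem HasDerivAt.norm {F : Type*} [NormedAddCommGroup F] [InnerProductSpace ℝ F]
    {f : ℝ → F} {f' : F} {t : ℝ} (hf : HasDerivAt f f' t) (h0 : f t ≠ 0) :
    HasDerivAt (fun s => ‖f s‖) (⟪f t, f'⟫ / ‖f t‖) t := by
  have := hf.norm_sq.sqrt (by positivity)
  simp only [Real.sqrt_sq (norm_nonneg _)] at this
  convert this using 1
  field_simp

theorem hasDerivAt_cross_of_central {r v : ℝ → E³} {k t : ℝ} (hr : HasDerivAt r (v t) t)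
    (hv : HasDerivAt v (k • r t) t) : HasDerivAt (fun s => cross (r s) (v s)) 0 t := by
  convert hr.cross hv using 1
  rw [isBilinearMap_cross.smul_right, EuclideanSpace.cross_self, EuclideanSpace.cross_self,
    smul_zero, add_zero]

noncomputable def laplaceRungeLenz (μ : ℝ) (r v : E³) : E³ := cross v (cross r v) - (μ / ‖r‖) • r

theorem hasDerivAt_laplaceRungeLenz {μ t : ℝ} {r v : ℝ → E³} (h0 : r t ≠ 0)
    (hr : HasDerivAt r (v t) t) (hv : HasDerivAt v (-(μ / ‖r t‖ ^ 3) • r t) t) :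
    HasDerivAt (fun s => laplaceRungeLenz μ (r s) (v s)) 0 t := by
  have hrt : ‖r t‖ ≠ 0 := norm_ne_zero_iff.mpr h0
  have hvL := hv.cross (hasDerivAt_cross_of_central hr hv)
  have hμr := ((hasDerivAt_const t μ).div (hr.norm h0) hrt).smul hr
  refine (hvL.sub hμr).congr_deriv ?_
  rw [isBilinearMap_cross.smul_left, EuclideanSpace.cross_cross_eq_inner_smul_sub_inner_smul,
    real_inner_self_eq_norm_sq, EuclideanSpace.cross_zero_right, Pi.div_apply]
  match_scalars <;> field_simp <;> ring

theorem kepler_lrl_conserved_general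
    (μ : ℝ)
    (r v : ℝ → EuclideanSpace ℝ (Fin 3))
    (hr0 : ∀ t, r t ≠ 0)
    (hrd : ∀ t, HasDerivAt r (v t) t)
    (hvd : ∀ t, HasDerivAt v (-(μ / ‖r t‖ ^ 3) • r t) t) :
    ∀ t : ℝ,
      cross (v t) (cross (r t) (v t)) - (μ / ‖r t‖) • r t =
      cross (v 0) (cross (r 0) (v 0)) - (μ / ‖r 0‖) • r 0 := by
  have hA (t : ℝ) := hasDerivAt_laplaceRungeLenz (hr0 t) (hrd t) (hvd t)
  intro t
  exact is_const_of_deriv_eq_zero (fun s => (hA s).differentiableAt) (fun s => (hA s).deriv) t 0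

/-- Conservation of the Laplace–Runge–Lenz vector
A(t) = v(t) × (r(t) × v(t)) − μ r(t)/|r(t)| along Kepler dynamics. -/
theorem kepler_lrl_conserved
    (μ : ℝ) (hμ : 0 < μ)
    (r v : ℝ → EuclideanSpace ℝ (Fin 3))
    (hr0 : ∀ t, r t ≠ 0)
    (hrd : ∀ t, HasDerivAt r (v t) t)
    (hvd : ∀ t, HasDerivAt v (-(μ / ‖r t‖ ^ 3) • r t) t) :
    ∀ t : ℝ,
      cross (v t) (cross (r t) (v t)) - (μ / ‖r t‖) • r t =
      cross (v 0) (cross (r 0) (v 0)) - (μ / ‖r 0‖) • r 0 :=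
  kepler_lrl_conserved_general μ r v hr0 hrd hvd
end

section
/- Sufficiency of the weak formulation: let F : ℝᵐ × ℝ → ℝᵐ be continuous and let x : [a, b] → ℝᵐ be continuous. If for every continuously differentiable test function w : [a, b] → ℝᵐ one has ∫ₐᵇ (⟨w'(t), x(t)⟩ + ⟨w(t), F(x(t), t)⟩) dt − ⟨w(b), x(b)⟩ + ⟨w(a), x(a)⟩ = 0, then x is continuously differentiable on [a, b] and x'(t) = F(x(t), t) for all t ∈ [a, b]. -/
/-!
Let `z(t) = x(a) + ∫ₐᵗ F(x(s), s) ds`. By integration by parts the strong solution `z` satisfies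
the weak form, so by linearity `y = x - z` satisfies the weak form of `y' = 0`, and `y(a) = 0`.
Testing with `w(t) = -∫ₜᵇ y`, which vanishes at `b` and has `w' = y`, leaves `∫ₐᵇ ‖y‖² = 0`,
hence `x = z` on `[a, b]`.
-/

open scoped RealInnerProductSpace
open Set MeasureTheory intervalIntegral

variable {E : Type*} [NormedAddCommGroup E] [InnerProductSpace ℝ E] {a b : ℝ}

theorem hasDerivWithinAt_integral_Icc [CompleteSpace E] {f : ℝ → E}
    (hf : ContinuousOn f (Icc a b)) {t : ℝ} (ht : t ∈ Icc a b) :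
    HasDerivWithinAt (fun u => ∫ s in a..u, f s) (f t) (Icc a b) t := by
  have : Fact (t ∈ Icc a b) := ⟨ht⟩
  exact integral_hasDerivWithinAt_right
    ((hf.mono (Icc_subset_Icc le_rfl ht.2)).intervalIntegrable_of_Icc ht.1)
    (hf.stronglyMeasurableAtFilter_nhdsWithin measurableSet_Icc t) (hf t ht)

theorem integral_eq_sub_of_hasDerivWithinAt_Icc [CompleteSpace E] (hab : a ≤ b) {f f' : ℝ → E}
    (hf : ∀ t ∈ Icc a b, HasDerivWithinAt f (f' t) (Icc a b) t)
    (hf' : ContinuousOn f' (Icc a b)) :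
    ∫ t in a..b, f' t = f b - f a :=
  integral_eq_sub_of_hasDerivAt_of_le hab (fun t ht => (hf t ht).continuousWithinAt)
    (fun t ht => (hf t (Ioo_subset_Icc_self ht)).hasDerivAt (Icc_mem_nhds ht.1 ht.2))
    (hf'.intervalIntegrable_of_Icc hab)

theorem eqOn_zero_of_integral_eq_zero_of_nonneg {f : ℝ → ℝ} (hab : a < b)
    (hf : ContinuousOn f (Icc a b)) (hf₀ : ∀ t ∈ Icc a b, 0 ≤ f t)
    (hint : ∫ t in a..b, f t = 0) : EqOn f 0 (Icc a b) := by
  have hnonneg : 0 ≤ᵐ[volume.restrict (Ioc a b)] f :=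
    (ae_restrict_iff' measurableSet_Ioc).2 (.of_forall fun t ht => hf₀ t (Ioc_subset_Icc_self ht))
  have hae := (integral_eq_zero_iff_of_le_of_nonneg_ae hab.le hnonneg
    (hf.intervalIntegrable_of_Icc hab.le)).1 hint
  rw [Measure.restrict_congr_set Ioc_ae_eq_Icc] at hae
  exact Measure.eqOn_Icc_of_ae_eq volume hab.ne hae hf continuousOn_const

/-- The left-hand side of the weak form (32) for a state `x` with right-hand side `f`,
tested with `w` of derivative `w'`. -/
noncomputable def weakResidual (a b : ℝ) (x f w w' : ℝ → E) : ℝ :=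
  (∫ t in a..b, (⟪w' t, x t⟫ + ⟪w t, f t⟫)) - ⟪w b, x b⟫ + ⟪w a, x a⟫

theorem weakResidual_sub (hab : a ≤ b) {x₁ x₂ f₁ f₂ w w' : ℝ → E}
    (hx₁ : ContinuousOn x₁ (Icc a b)) (hx₂ : ContinuousOn x₂ (Icc a b))
    (hf₁ : ContinuousOn f₁ (Icc a b)) (hf₂ : ContinuousOn f₂ (Icc a b))
    (hw : ContinuousOn w (Icc a b)) (hw' : ContinuousOn w' (Icc a b)) :
    weakResidual a b x₁ f₁ w w' - weakResidual a b x₂ f₂ w w' =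
      weakResidual a b (x₁ - x₂) (f₁ - f₂) w w' := by
  have hint₁ : IntervalIntegrable (fun t => ⟪w' t, x₁ t⟫ + ⟪w t, f₁ t⟫) volume a b :=
    ((hw'.inner hx₁).add (hw.inner hf₁)).intervalIntegrable_of_Icc hab
  have hint₂ : IntervalIntegrable (fun t => ⟪w' t, x₂ t⟫ + ⟪w t, f₂ t⟫) volume a b :=
    ((hw'.inner hx₂).add (hw.inner hf₂)).intervalIntegrable_of_Icc hab
  have hint : ∫ t in a..b, (⟪w' t, (x₁ - x₂) t⟫ + ⟪w t, (f₁ - f₂) t⟫) =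
      (∫ t in a..b, (⟪w' t, x₁ t⟫ + ⟪w t, f₁ t⟫)) - ∫ t in a..b, (⟪w' t, x₂ t⟫ + ⟪w t, f₂ t⟫) := by
    rw [← integral_sub hint₁ hint₂]
    congr with t
    simp only [Pi.sub_apply, inner_sub_right]
    ring
  rw [weakResidual, weakResidual, weakResidual, hint]
  simp only [Pi.sub_apply, inner_sub_right]
  ring

theorem weakResidual_eq_zero_of_hasDerivWithinAt (hab : a ≤ b) {z f w w' : ℝ → E}
    (hw : ∀ t ∈ Icc a b, HasDerivWithinAt w (w' t) (Icc a b) t) (hw' : ContinuousOn w' (Icc a b))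
    (hz : ∀ t ∈ Icc a b, HasDerivWithinAt z (f t) (Icc a b) t) (hf : ContinuousOn f (Icc a b)) :
    weakResidual a b z f w w' = 0 := by
  have hwc : ContinuousOn w (Icc a b) := fun t ht => (hw t ht).continuousWithinAt
  have hzc : ContinuousOn z (Icc a b) := fun t ht => (hz t ht).continuousWithinAt
  have hparts := integral_eq_sub_of_hasDerivWithinAt_Icc hab
    (fun t ht => (hw t ht).inner ℝ (hz t ht)) ((hwc.inner hf).add (hw'.inner hzc))
  simp only [weakResidual, add_comm ⟪w' _, z _⟫, hparts]
  ring

theorem eqOn_zero_of_weakResidual_eq_zero [CompleteSpace E] (hab : a ≤ b) {y : ℝ → E}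
    (hy : ContinuousOn y (Icc a b)) (hya : y a = 0)
    (hweak : ∀ w w' : ℝ → E, (∀ t ∈ Icc a b, HasDerivWithinAt w (w' t) (Icc a b) t) →
      ContinuousOn w' (Icc a b) → weakResidual a b y 0 w w' = 0) :
    EqOn y 0 (Icc a b) := by
  rcases hab.eq_or_lt with rfl | hlt
  · simpa [Icc_self] using hya
  set w : ℝ → E := fun u => (∫ s in a..u, y s) - ∫ s in a..b, y s
  have hw : ∀ t ∈ Icc a b, HasDerivWithinAt w (y t) (Icc a b) t :=
    fun t ht => (hasDerivWithinAt_integral_Icc hy ht).sub_const _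
  have hnorm : ∫ t in a..b, ‖y t‖ ^ 2 = 0 := by
    simpa [weakResidual, w, hya, real_inner_self_eq_norm_sq] using hweak w y hw hy
  intro t ht
  simpa using eqOn_zero_of_integral_eq_zero_of_nonneg hlt (hy.norm.pow 2)
    (fun s _ => sq_nonneg ‖y s‖) hnorm ht

/-- Sufficiency of the weak (weighted-residual) formulation, Eq. (32) of the paper:
if a continuous x satisfies the weak form with boundary conditions of the weak type
against every C¹ test function w, then x is (continuously) differentiable on [a,b]
with x'(t) = F(x(t), t) there; the derivative t ↦ F(x(t), t) is automatically
continuous. -/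
theorem weak_form_sufficient
    (m : ℕ) (a b : ℝ) (hab : a ≤ b)
    (F : EuclideanSpace ℝ (Fin m) → ℝ → EuclideanSpace ℝ (Fin m))
    (hF : Continuous fun p : EuclideanSpace ℝ (Fin m) × ℝ => F p.1 p.2)
    (x : ℝ → EuclideanSpace ℝ (Fin m))
    (hx : ContinuousOn x (Set.Icc a b))
    (hweak : ∀ w w' : ℝ → EuclideanSpace ℝ (Fin m),
      (∀ t ∈ Set.Icc a b, HasDerivWithinAt w (w' t) (Set.Icc a b) t) →
      ContinuousOn w' (Set.Icc a b) →
      (∫ t in a..b, (⟪w' t, x t⟫ + ⟪w t, F (x t) t⟫))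
        - ⟪w b, x b⟫ + ⟪w a, x a⟫ = 0) :
    ∀ t ∈ Set.Icc a b, HasDerivWithinAt x (F (x t) t) (Set.Icc a b) t := by
  have hf : ContinuousOn (fun t => F (x t) t) (Icc a b) :=
    hF.comp_continuousOn (hx.prodMk continuousOn_id)
  set z : ℝ → EuclideanSpace ℝ (Fin m) := fun u => x a + ∫ s in a..u, F (x s) s
  have hz : ∀ t ∈ Icc a b, HasDerivWithinAt z (F (x t) t) (Icc a b) t :=
    fun t ht => (hasDerivWithinAt_integral_Icc hf ht).const_add (x a)
  have hzc : ContinuousOn z (Icc a b) := fun t ht => (hz t ht).continuousWithinAt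
  have hxz : EqOn (x - z) 0 (Icc a b) := by
    refine eqOn_zero_of_weakResidual_eq_zero hab (hx.sub hzc) (by simp [z]) fun w w' hw hw' => ?_
    have hwc : ContinuousOn w (Icc a b) := fun t ht => (hw t ht).continuousWithinAt
    rw [← sub_self (fun t => F (x t) t), ← weakResidual_sub hab hx hzc hf hf hwc hw',
      weakResidual_eq_zero_of_hasDerivWithinAt hab hw hw' hz hf]
    exact (sub_zero _).trans (hweak w w' hw hw')
  intro t ht
  exact (hz t ht).congr (fun s hs => sub_eq_zero.1 (hxz hs)) (sub_eq_zero.1 (hxz ht))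
end

section
/- Hyperbolic Kepler time equation: let (r, v) solve the Kepler dynamics on all of ℝ with ε = ½|v(0)|² − μ/|r(0)| > 0 and h = r(0) × v(0) ≠ 0, and suppose the pericenter occurs at t = 0, i.e. ⟨r(0), v(0)⟩ = 0 and |r(0)| = inf_{t∈ℝ} |r(t)|. Set a = −μ/(2ε) and e = 1 − |r(0)|/a. Then for every t ≥ 0 there exists a unique H ≥ 0 with cosh H = (1/e)(1 − |r(t)|/a), and this H satisfies t = (e sinh H − H) √(|a|³/μ). -/
open scoped RealInnerProductSpace

open Real

/-!
Conservation of energy and of `‖r‖²‖v‖² - ⟪r, v⟫²` (the squared angular momentum) turn the motion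
into the scalar identity `⟪r, v⟫² = 2ε (‖r‖² - ‖r₀‖²) + 2μ (‖r‖ - ‖r₀‖)`, while
`d⟪r, v⟫/dt = 2ε + μ/‖r‖ > 0`. Defining the hyperbolic anomaly through `sinh H ∝ ⟪r, v⟫`
rather than through `cosh H`, the identity says exactly `cosh H = (1 - ‖r‖/a)/e`; `H` is then
differentiable in `t` also at the pericenter, nonnegative for `t ≥ 0`, and a direct computation
gives `d/dt ((e sinh H - H) √(|a|³/μ)) = 1`.
-/

theorem eq_of_forall_hasDerivAt_zero {f : ℝ → ℝ} (hf : ∀ t, HasDerivAt f 0 t) (t s : ℝ) :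
    f t = f s :=
  is_const_of_deriv_eq_zero (fun t => (hf t).differentiableAt) (fun t => (hf t).deriv) t s

section KeplerFlow

variable {E : Type*} [NormedAddCommGroup E] [InnerProductSpace ℝ E]

structure IsKeplerFlow (μ : ℝ) (r v : ℝ → E) : Prop where
  ne_zero : ∀ t, r t ≠ 0
  hasDerivAt_position : ∀ t, HasDerivAt r (v t) t
  hasDerivAt_velocity : ∀ t, HasDerivAt v (-(μ / ‖r t‖ ^ 3) • r t) t

namespace IsKeplerFlow

variable {μ ε : ℝ} {r v : ℝ → E}

theorem norm_pos (hK : IsKeplerFlow μ r v) (t : ℝ) : 0 < ‖r t‖ :=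
  norm_pos_iff.mpr (hK.ne_zero t)

theorem norm_ne_zero (hK : IsKeplerFlow μ r v) (t : ℝ) : ‖r t‖ ≠ 0 :=
  (hK.norm_pos t).ne'

theorem hasDerivAt_norm (hK : IsKeplerFlow μ r v) (t : ℝ) :
    HasDerivAt (fun s => ‖r s‖) (⟪r t, v t⟫ / ‖r t‖) t := by
  have h := (hK.hasDerivAt_position t).norm_sq.sqrt (pow_ne_zero 2 (hK.norm_ne_zero t))
  simp only [sqrt_sq (norm_nonneg _)] at h
  convert h using 1
  field_simp [hK.norm_ne_zero t]

theorem hasDerivAt_inner (hK : IsKeplerFlow μ r v) (t : ℝ) :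
    HasDerivAt (fun s => ⟪r s, v s⟫) (‖v t‖ ^ 2 - μ / ‖r t‖) t := by
  refine ((hK.hasDerivAt_position t).inner ℝ (hK.hasDerivAt_velocity t)).congr_deriv ?_
  rw [real_inner_smul_right, real_inner_self_eq_norm_sq, real_inner_self_eq_norm_sq]
  field_simp [hK.norm_ne_zero t]
  ring

theorem energy_eq (hK : IsKeplerFlow μ r v) (t s : ℝ) :
    1 / 2 * ‖v t‖ ^ 2 - μ / ‖r t‖ = 1 / 2 * ‖v s‖ ^ 2 - μ / ‖r s‖ := by
  refine eq_of_forall_hasDerivAt_zero (f := fun t => 1 / 2 * ‖v t‖ ^ 2 - μ / ‖r t‖)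
    (fun t => ?_) t s
  refine (((hK.hasDerivAt_velocity t).norm_sq.const_mul (1 / 2)).sub
    ((hasDerivAt_const t μ).div (hK.hasDerivAt_norm t) (hK.norm_ne_zero t))).congr_deriv ?_
  rw [real_inner_smul_right, real_inner_comm]
  field_simp [hK.norm_ne_zero t]
  ring

/-- `‖r‖²‖v‖² - ⟪r, v⟫²` is the squared angular momentum. -/
theorem norm_sq_mul_norm_sq_sub_inner_sq_eq (hK : IsKeplerFlow μ r v) (t s : ℝ) :
    ‖r t‖ ^ 2 * ‖v t‖ ^ 2 - ⟪r t, v t⟫ ^ 2 = ‖r s‖ ^ 2 * ‖v s‖ ^ 2 - ⟪r s, v s⟫ ^ 2 := by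
  refine eq_of_forall_hasDerivAt_zero
    (f := fun t => ‖r t‖ ^ 2 * ‖v t‖ ^ 2 - ⟪r t, v t⟫ ^ 2) (fun t => ?_) t s
  refine (((hK.hasDerivAt_position t).norm_sq.mul (hK.hasDerivAt_velocity t).norm_sq).sub
    ((hK.hasDerivAt_inner t).pow 2)).congr_deriv ?_
  rw [real_inner_smul_right, real_inner_comm]
  field_simp [hK.norm_ne_zero t]
  ring

theorem norm_velocity_sq_eq (hK : IsKeplerFlow μ r v) {s : ℝ}
    (hε : ε = 1 / 2 * ‖v s‖ ^ 2 - μ / ‖r s‖) (t : ℝ) :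
    ‖v t‖ ^ 2 = 2 * ε + 2 * μ / ‖r t‖ := by
  rw [hε, ← hK.energy_eq t s]
  ring

theorem inner_sq_eq (hK : IsKeplerFlow μ r v) {s : ℝ}
    (hε : ε = 1 / 2 * ‖v s‖ ^ 2 - μ / ‖r s‖) (hs : ⟪r s, v s⟫ = 0) (t : ℝ) :
    ⟪r t, v t⟫ ^ 2 = 2 * ε * (‖r t‖ ^ 2 - ‖r s‖ ^ 2) + 2 * μ * (‖r t‖ - ‖r s‖) := by
  have h := hK.norm_sq_mul_norm_sq_sub_inner_sq_eq t s
  rw [hs, hK.norm_velocity_sq_eq hε t, hK.norm_velocity_sq_eq hε s] at h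
  field_simp [hK.norm_ne_zero t, hK.norm_ne_zero s] at h
  linear_combination -h

theorem hasDerivAt_inner_of_energy (hK : IsKeplerFlow μ r v) {s : ℝ}
    (hε : ε = 1 / 2 * ‖v s‖ ^ 2 - μ / ‖r s‖) (t : ℝ) :
    HasDerivAt (fun s => ⟪r s, v s⟫) (2 * ε + μ / ‖r t‖) t := by
  convert hK.hasDerivAt_inner t using 1
  rw [hK.norm_velocity_sq_eq hε t]
  ring

theorem monotone_inner (hK : IsKeplerFlow μ r v) (hμ : 0 ≤ μ) {s : ℝ}
    (hε : ε = 1 / 2 * ‖v s‖ ^ 2 - μ / ‖r s‖) (hε₀ : 0 ≤ ε) :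
    Monotone fun t => ⟪r t, v t⟫ :=
  monotone_of_deriv_nonneg (fun t => (hK.hasDerivAt_inner_of_energy hε t).differentiableAt)
    fun t => (hK.hasDerivAt_inner_of_energy hε t).deriv ▸ by positivity

end IsKeplerFlow

end KeplerFlow

/-- On a hyperbolic orbit `⟪r, v⟫ = e √(μ b) sinh H`, where `b = -a > 0`. -/
noncomputable def hyperbolicAnomaly (μ b e w : ℝ) : ℝ :=
  arsinh (w / (e * √(μ * b)))

section HyperbolicAnomaly

variable {μ b e ρ₀ : ℝ}

theorem cosh_hyperbolicAnomaly (hμ : 0 < μ) (hb : 0 < b) (he : e = 1 + ρ₀ / b) (hρ₀ : 0 ≤ ρ₀)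
    {ρ w : ℝ} (hρ : 0 ≤ ρ) (hw : w ^ 2 = μ / b * (ρ ^ 2 - ρ₀ ^ 2) + 2 * μ * (ρ - ρ₀)) :
    cosh (hyperbolicAnomaly μ b e w) = (1 + ρ / b) / e := by
  have he₀ : 0 < e := by rw [he]; positivity
  rw [hyperbolicAnomaly, cosh_arsinh, ← sqrt_sq (by positivity : 0 ≤ (1 + ρ / b) / e)]
  congr 1
  rw [div_pow, mul_pow, sq_sqrt (by positivity), hw, he]
  field_simp
  ring

theorem hasDerivAt_keplerTime (hμ : 0 < μ) (hb : 0 < b) (he : e = 1 + ρ₀ / b) (hρ₀ : 0 ≤ ρ₀)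
    {ρ w : ℝ → ℝ} {t : ℝ} (hρ : 0 < ρ t) (hw : HasDerivAt w (μ / b + μ / ρ t) t)
    (hsq : w t ^ 2 = μ / b * (ρ t ^ 2 - ρ₀ ^ 2) + 2 * μ * (ρ t - ρ₀)) :
    HasDerivAt (fun t => (e * sinh (hyperbolicAnomaly μ b e (w t)) -
      hyperbolicAnomaly μ b e (w t)) * √(b ^ 3 / μ)) 1 t := by
  have hcosh := cosh_hyperbolicAnomaly hμ hb he hρ₀ hρ.le hsq
  rw [hyperbolicAnomaly, cosh_arsinh] at hcosh
  simp only [hyperbolicAnomaly, sinh_arsinh]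
  refine ((((hw.div_const _).const_mul e).sub (hw.div_const _).arsinh).mul_const _).congr_deriv ?_
  have hk : √(b ^ 3 / μ) = b / μ * √(μ * b) := by
    rw [show b ^ 3 / μ = (b / μ) ^ 2 * (μ * b) by field_simp,
      sqrt_mul (by positivity), sqrt_sq (by positivity)]
  rw [hcosh, hk, smul_eq_mul, he]
  field_simp
  ring

theorem keplerTime_eq (hμ : 0 < μ) (hb : 0 < b) (he : e = 1 + ρ₀ / b) (hρ₀ : 0 ≤ ρ₀)
    {ρ w : ℝ → ℝ} (hρ : ∀ t, 0 < ρ t) (hw : ∀ t, HasDerivAt w (μ / b + μ / ρ t) t)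
    (hsq : ∀ t, w t ^ 2 = μ / b * (ρ t ^ 2 - ρ₀ ^ 2) + 2 * μ * (ρ t - ρ₀)) (hw₀ : w 0 = 0)
    (t : ℝ) :
    (e * sinh (hyperbolicAnomaly μ b e (w t)) - hyperbolicAnomaly μ b e (w t)) * √(b ^ 3 / μ)
      = t := by
  have h := eq_of_forall_hasDerivAt_zero (fun s => ((hasDerivAt_keplerTime hμ hb he hρ₀ (hρ s)
    (hw s) (hsq s)).sub (hasDerivAt_id s)).congr_deriv (sub_self 1)) t 0
  simpa [hyperbolicAnomaly, hw₀, sub_eq_zero] using h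

end HyperbolicAnomaly

theorem kepler_hyperbolic_time_equation_general
    (μ : ℝ) (hμ : 0 < μ)
    (r v : ℝ → EuclideanSpace ℝ (Fin 3))
    (hr0 : ∀ t, r t ≠ 0)
    (hrd : ∀ t, HasDerivAt r (v t) t)
    (hvd : ∀ t, HasDerivAt v (-(μ / ‖r t‖ ^ 3) • r t) t)
    (ε : ℝ) (hεdef : ε = (1 / 2) * ‖v 0‖ ^ 2 - μ / ‖r 0‖) (hε : 0 < ε)
    (hperi : ⟪r 0, v 0⟫ = 0)
    (a e : ℝ) (ha : a = -μ / (2 * ε)) (he : e = 1 - ‖r 0‖ / a) :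
    ∀ t : ℝ, 0 ≤ t →
      (∃! H : ℝ, 0 ≤ H ∧ Real.cosh H = (1 / e) * (1 - ‖r t‖ / a)) ∧
      (∀ H : ℝ, 0 ≤ H → Real.cosh H = (1 / e) * (1 - ‖r t‖ / a) →
        t = (e * Real.sinh H - H) * Real.sqrt (|a| ^ 3 / μ)) := by
  intro t ht
  have hK : IsKeplerFlow μ r v := ⟨hr0, hrd, hvd⟩
  set b := μ / (2 * ε) with hb_def
  have hb : 0 < b := by positivity
  have hab : a = -b := by rw [ha, neg_div]
  have h2ε : 2 * ε = μ / b := by rw [hb_def]; field_simp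
  have he' : e = 1 + ‖r 0‖ / b := by rw [he, hab, div_neg, sub_neg_eq_add]
  have hsq : ∀ s, ⟪r s, v s⟫ ^ 2 = μ / b * (‖r s‖ ^ 2 - ‖r 0‖ ^ 2) + 2 * μ * (‖r s‖ - ‖r 0‖) :=
    h2ε ▸ hK.inner_sq_eq hεdef hperi
  have hw : ∀ s, HasDerivAt (fun s => ⟪r s, v s⟫) (μ / b + μ / ‖r s‖) s :=
    h2ε ▸ hK.hasDerivAt_inner_of_energy hεdef
  have hcosh : 1 / e * (1 - ‖r t‖ / a) = Real.cosh (hyperbolicAnomaly μ b e ⟪r t, v t⟫) := by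
    rw [cosh_hyperbolicAnomaly hμ hb he' (norm_nonneg _) (norm_nonneg _) (hsq t), hab]
    ring
  have hH₀ : 0 ≤ hyperbolicAnomaly μ b e ⟪r t, v t⟫ := by
    have he₀ : 0 ≤ e := by rw [he']; positivity
    have hw₀ : 0 ≤ ⟪r t, v t⟫ := hperi ▸ hK.monotone_inner hμ.le hεdef hε.le ht
    exact arsinh_nonneg_iff.mpr (by positivity)
  have huniq : ∀ H, 0 ≤ H → Real.cosh H = 1 / e * (1 - ‖r t‖ / a) →
      H = hyperbolicAnomaly μ b e ⟪r t, v t⟫ :=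
    fun H hH hH' => cosh_injOn hH hH₀ (hH'.trans hcosh)
  refine ⟨⟨_, ⟨hH₀, hcosh.symm⟩, fun H ⟨hH, hH'⟩ => huniq H hH hH'⟩,
    fun H hH hH' => ?_⟩
  rw [huniq H hH hH', hab, abs_neg, abs_of_pos hb]
  exact (keplerTime_eq hμ hb he' (norm_nonneg _) hK.norm_pos hw hsq hperi t).symm

/-- Hyperbolic Kepler time equation (paper's Eqs. (14)–(15)): on a hyperbolic
Kepler orbit with pericenter at t = 0, for every t ≥ 0 there is a unique H ≥ 0
with cosh H = (1/e)(1 − |r(t)|/a), and this H satisfies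
t = (e sinh H − H) √(|a|³/μ). -/
theorem kepler_hyperbolic_time_equation
    (μ : ℝ) (hμ : 0 < μ)
    (r v : ℝ → EuclideanSpace ℝ (Fin 3))
    (hr0 : ∀ t, r t ≠ 0)
    (hrd : ∀ t, HasDerivAt r (v t) t)
    (hvd : ∀ t, HasDerivAt v (-(μ / ‖r t‖ ^ 3) • r t) t)
    (ε : ℝ) (hεdef : ε = (1 / 2) * ‖v 0‖ ^ 2 - μ / ‖r 0‖) (hε : 0 < ε)
    (hh : cross (r 0) (v 0) ≠ 0)
    (hperi : ⟪r 0, v 0⟫ = 0)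
    (hmin : ∀ t : ℝ, ‖r 0‖ ≤ ‖r t‖)
    (a e : ℝ) (ha : a = -μ / (2 * ε)) (he : e = 1 - ‖r 0‖ / a) :
    ∀ t : ℝ, 0 ≤ t →
      (∃! H : ℝ, 0 ≤ H ∧ Real.cosh H = (1 / e) * (1 - ‖r t‖ / a)) ∧
      (∀ H : ℝ, 0 ≤ H → Real.cosh H = (1 / e) * (1 - ‖r t‖ / a) →
        t = (e * Real.sinh H - H) * Real.sqrt (|a| ^ 3 / μ)) :=
  kepler_hyperbolic_time_equation_general μ hμ r v hr0 hrd hvd ε hεdef hε hperi a e ha he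
end
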